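/- Let φ⁰(X, z) = ((X, X(z))² - 1/(2π)) e^{-2πR(X,z)} where R(X,z) = ½(X,X(z))² - (X,X), on trace-zero 2×2 real matrices with (A,B) = -tr(AB) and X(z) = (1/y)·[[-x, x²+y²],[-1, x]]. If q(X) = det(X) > 0 (say X = [[x₁,x₂],[x₃,-x₁]] with x₃ ≠ 0), then there exists C > 0 such that φ⁰(X, x+iy) = O(e^{-Cx²}) as x → ±∞ uniformly in y, O(e^{-Cy²}) as y → ∞ uniformly in x, and O(e^{-C/y²}) as y → 0 uniformly in x. -/
import Mathlib

open Matrix Real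

noncomputable def Xmat (x y : ℝ) : Matrix (Fin 2) (Fin 2) ℝ :=
  (1 / y) • !![-x, x ^ 2 + y ^ 2; -1, x]

noncomputable def Rfun (X : Matrix (Fin 2) (Fin 2) ℝ) (x y : ℝ) : ℝ :=
  (1 / 2) * (-Matrix.trace (X * Xmat x y)) ^ 2 - (-Matrix.trace (X * X))

/-- The scalar part of the Kudla-Millson form `φ⁰(X,z)`. -/
noncomputable def phi0 (X : Matrix (Fin 2) (Fin 2) ℝ) (x y : ℝ) : ℝ :=
  ((-Matrix.trace (X * Xmat x y)) ^ 2 - 1 / (2 * π)) * Real.exp (-2 * π * Rfun X x y)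

lemma phi0_bound (X : Matrix (Fin 2) (Fin 2) ℝ) (q x y : ℝ)
    (hXX : -Matrix.trace (X * X) = 2 * q) :
    |phi0 X x y| ≤
      Real.exp (4 * π * q) * Real.exp (-π * (-Matrix.trace (X * Xmat x y)) ^ 2 / 2) := by
  set t := -Matrix.trace (X * Xmat x y) with ht
  have hR : Rfun X x y = t ^ 2 / 2 - 2 * q := by rw [Rfun, hXX]; ring
  have hπ1 : 1 / (2 * π) ≤ 1 := by
    rw [div_le_one (by positivity)]
    nlinarith [pi_gt_three]
  have hπ0 : (0:ℝ) < 1 / (2 * π) := by positivity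
  have h1 : |t ^ 2 - 1 / (2 * π)| ≤ t ^ 2 + 1 := by
    rw [abs_le]; constructor <;> nlinarith [sq_nonneg t]
  have h2 : t ^ 2 + 1 ≤ Real.exp (π * t ^ 2 / 2) := by
    calc t ^ 2 + 1 ≤ Real.exp (t ^ 2) := Real.add_one_le_exp _
      _ ≤ Real.exp (π * t ^ 2 / 2) := by
          apply Real.exp_le_exp.2
          nlinarith [sq_nonneg t, pi_gt_three]
  calc |phi0 X x y| = |t ^ 2 - 1 / (2 * π)| * Real.exp (-2 * π * (t ^ 2 / 2 - 2 * q)) := by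
        rw [phi0, hR, abs_mul, abs_of_pos (Real.exp_pos _)]
    _ ≤ Real.exp (π * t ^ 2 / 2) * Real.exp (-2 * π * (t ^ 2 / 2 - 2 * q)) :=
        mul_le_mul_of_nonneg_right (h1.trans h2) (Real.exp_pos _).le
    _ = Real.exp (4 * π * q) * Real.exp (-π * t ^ 2 / 2) := by
        rw [← Real.exp_add, ← Real.exp_add]; ring_nf

theorem phi0_square_exponential_decay (x₁ x₂ x₃ : ℝ) (hx₃ : x₃ ≠ 0)
    (hq : 0 < Matrix.det !![x₁, x₂; x₃, -x₁]) :
    ∃ C > 0,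
      (∃ M : ℝ, ∃ A : ℝ, ∀ x y : ℝ, 0 < y → A ≤ |x| →
        |phi0 !![x₁, x₂; x₃, -x₁] x y| ≤ M * Real.exp (-C * x ^ 2)) ∧
      (∃ M : ℝ, ∃ A : ℝ, ∀ x y : ℝ, A ≤ y →
        |phi0 !![x₁, x₂; x₃, -x₁] x y| ≤ M * Real.exp (-C * y ^ 2)) ∧
      (∃ M : ℝ, ∃ ε > 0, ∀ x y : ℝ, 0 < y → y ≤ ε →
        |phi0 !![x₁, x₂; x₃, -x₁] x y| ≤ M * Real.exp (-C / y ^ 2)) := by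
  have hq0 : 0 < x₁ * (-x₁) - x₂ * x₃ := by rw [Matrix.det_fin_two_of] at hq; exact hq
  set q : ℝ := x₁ * (-x₁) - x₂ * x₃ with hqdef
  have hq' : 0 < q := hq0
  set X := !![x₁, x₂; x₃, -x₁] with hX
  have hXX : -Matrix.trace (X * X) = 2 * q := by
    simp [hX, Matrix.trace_fin_two, Matrix.mul_apply, Fin.sum_univ_two, hqdef]
    ring
  have hx3 : 0 < |x₃| := abs_pos.2 hx₃
  have hx32 : 0 < x₃ ^ 2 := by positivity
  -- the key algebraic identity
  have key : ∀ x y : ℝ, y ≠ 0 →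
      x₃ * (-Matrix.trace (X * Xmat x y)) * y
        = -((x₃ * x - x₁) ^ 2 + q + x₃ ^ 2 * y ^ 2) := by
    intro x y hy
    simp [hX, hqdef, Xmat, Matrix.trace_fin_two, Matrix.mul_apply, Fin.sum_univ_two]
    field_simp
    ring
  have keyabs : ∀ x y : ℝ, 0 < y →
      |x₃| * |(-Matrix.trace (X * Xmat x y))| * y
        = (x₃ * x - x₁) ^ 2 + q + x₃ ^ 2 * y ^ 2 := by
    intro x y hy
    have h := key x y hy.ne'
    have hS : 0 < (x₃ * x - x₁) ^ 2 + q + x₃ ^ 2 * y ^ 2 := by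
      nlinarith [sq_nonneg (x₃ * x - x₁), mul_nonneg hx32.le (sq_nonneg y)]
    calc |x₃| * |(-Matrix.trace (X * Xmat x y))| * y
        = |x₃ * (-Matrix.trace (X * Xmat x y)) * y| := by
          rw [abs_mul, abs_mul, abs_of_pos hy]
      _ = |-((x₃ * x - x₁) ^ 2 + q + x₃ ^ 2 * y ^ 2)| := by rw [h]
      _ = (x₃ * x - x₁) ^ 2 + q + x₃ ^ 2 * y ^ 2 := by rw [abs_neg, abs_of_pos hS]
  -- lower bounds on |t|
  have ht_y : ∀ x y : ℝ, 0 < y → |x₃| * y ≤ |(-Matrix.trace (X * Xmat x y))| := by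
    intro x y hy
    have h := keyabs x y hy
    nlinarith [sq_nonneg (x₃ * x - x₁), hq', sq_abs x₃, mul_pos hx3 hy,
      abs_nonneg (-Matrix.trace (X * Xmat x y))]
  have ht_q : ∀ x y : ℝ, 0 < y →
      q ≤ |x₃| * |(-Matrix.trace (X * Xmat x y))| * y := by
    intro x y hy
    have h := keyabs x y hy
    nlinarith [sq_nonneg (x₃ * x - x₁), mul_nonneg hx32.le (sq_nonneg y)]
  have ht_x : ∀ x y : ℝ, 0 < y →
      (x₃ * x - x₁) ^ 2 ≤ (-Matrix.trace (X * Xmat x y)) ^ 2 := by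
    intro x y hy
    have h := keyabs x y hy
    have h1 : (x₃ * x - x₁) ^ 2 ≤ |x₃| * |(-Matrix.trace (X * Xmat x y))| * y := by
      nlinarith [mul_nonneg hx32.le (sq_nonneg y)]
    have h2 : |x₃| * y * |(-Matrix.trace (X * Xmat x y))|
        ≤ |(-Matrix.trace (X * Xmat x y))| * |(-Matrix.trace (X * Xmat x y))| :=
      mul_le_mul_of_nonneg_right (ht_y x y hy) (abs_nonneg _)
    nlinarith [sq_abs (-Matrix.trace (X * Xmat x y))]
  set C : ℝ := min (π * x₃ ^ 2 / 8) (π * q ^ 2 / (2 * x₃ ^ 2)) with hCdef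
  have hC : 0 < C := lt_min (by positivity) (by positivity)
  have hC1 : C ≤ π * x₃ ^ 2 / 8 := min_le_left _ _
  have hC2 : C ≤ π * q ^ 2 / (2 * x₃ ^ 2) := min_le_right _ _
  refine ⟨C, hC, ?_, ?_, ?_⟩
  · -- x → ∞
    refine ⟨Real.exp (4 * π * q), 2 * |x₁| / |x₃|, fun x y hy hA => ?_⟩
    refine (phi0_bound X q x y hXX).trans ?_
    obtain ⟨t, ht⟩ : ∃ t : ℝ, t = -Matrix.trace (X * Xmat x y) := ⟨_, rfl⟩
    rw [← ht]
    have h1 : (x₃ * x - x₁) ^ 2 ≤ t ^ 2 := by rw [ht]; exact ht_x x y hy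
    have hxx : 2 * |x₁| ≤ |x| * |x₃| := (div_le_iff₀ hx3).mp hA
    have h2 : |x₃| * |x| - |x₁| ≤ |x₃ * x - x₁| := by
      calc |x₃| * |x| - |x₁| = |x₃ * x| - |x₁| := by rw [abs_mul]
        _ ≤ |x₃ * x - x₁| := abs_sub_abs_le_abs_sub _ _
    have h2' : |x₃| * |x| ≤ 2 * |x₃ * x - x₁| := by linarith
    have h3 : x₃ ^ 2 * x ^ 2 ≤ 4 * t ^ 2 := by
      nlinarith only [h1, mul_le_mul h2' h2' (by positivity) (by positivity : (0:ℝ) ≤ 2 * |x₃ * x - x₁|),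
        sq_abs x, sq_abs x₃, sq_abs (x₃ * x - x₁)]
    have hexp : -π * t ^ 2 / 2 ≤ -C * x ^ 2 := by
      nlinarith only [mul_le_mul_of_nonneg_right hC1 (sq_nonneg x),
        mul_le_mul_of_nonneg_left h3 pi_pos.le]
    exact mul_le_mul_of_nonneg_left (Real.exp_le_exp.2 hexp) (Real.exp_pos _).le
  · -- y → ∞
    refine ⟨Real.exp (4 * π * q), 1, fun x y hA => ?_⟩
    have hy : 0 < y := lt_of_lt_of_le one_pos hA
    refine (phi0_bound X q x y hXX).trans ?_
    obtain ⟨t, ht⟩ : ∃ t : ℝ, t = -Matrix.trace (X * Xmat x y) := ⟨_, rfl⟩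
    rw [← ht]
    have h1 : |x₃| * y ≤ |t| := by rw [ht]; exact ht_y x y hy
    have h3 : x₃ ^ 2 * y ^ 2 ≤ t ^ 2 := by
      nlinarith only [mul_le_mul h1 h1 (by positivity) (abs_nonneg t), sq_abs x₃, sq_abs t]
    have hexp : -π * t ^ 2 / 2 ≤ -C * y ^ 2 := by
      nlinarith only [mul_le_mul_of_nonneg_right hC1 (sq_nonneg y),
        mul_le_mul_of_nonneg_left h3 pi_pos.le, mul_nonneg pi_pos.le (sq_nonneg t)]
    exact mul_le_mul_of_nonneg_left (Real.exp_le_exp.2 hexp) (Real.exp_pos _).le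
  · -- y → 0
    refine ⟨Real.exp (4 * π * q), 1, one_pos, fun x y hy _ => ?_⟩
    refine (phi0_bound X q x y hXX).trans ?_
    obtain ⟨t, ht⟩ : ∃ t : ℝ, t = -Matrix.trace (X * Xmat x y) := ⟨_, rfl⟩
    rw [← ht]
    have htq : q ≤ |x₃| * |t| * y := by rw [ht]; exact ht_q x y hy
    have habs2 : (|x₃| * |t| * y) * (|x₃| * |t| * y) = x₃ ^ 2 * t ^ 2 * y ^ 2 := by
      calc (|x₃| * |t| * y) * (|x₃| * |t| * y) = |x₃| ^ 2 * |t| ^ 2 * y ^ 2 := by ring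
        _ = x₃ ^ 2 * t ^ 2 * y ^ 2 := by rw [sq_abs, sq_abs]
    have hq2 : q ^ 2 ≤ x₃ ^ 2 * t ^ 2 * y ^ 2 := by
      nlinarith only [mul_le_mul htq htq hq'.le
        (mul_nonneg (mul_nonneg (abs_nonneg x₃) (abs_nonneg t)) hy.le), habs2]
    have hC2' : C * (2 * x₃ ^ 2) ≤ π * q ^ 2 := by
      rw [← le_div_iff₀ (by positivity : (0:ℝ) < 2 * x₃ ^ 2)]
      exact hC2
    have hstep : C ≤ π * t ^ 2 / 2 * y ^ 2 := by
      have hmul : C * (2 * x₃ ^ 2) ≤ (π * t ^ 2 / 2 * y ^ 2) * (2 * x₃ ^ 2) := by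
        nlinarith only [mul_le_mul_of_nonneg_left hq2 pi_pos.le, hC2']
      exact le_of_mul_le_mul_right hmul (by positivity)
    have hexp : -π * t ^ 2 / 2 ≤ -C / y ^ 2 := by
      rw [le_div_iff₀ (by positivity : (0:ℝ) < y ^ 2)]
      nlinarith only [hstep]
    exact mul_le_mul_of_nonneg_left (Real.exp_le_exp.2 hexp) (Real.exp_pos _).le
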